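/- arXiv:1103.1951 — 5 statements merged into one kernel-verified Lean document; each statement's English description precedes it below -/
import Mathlib

section
/- Let f = (f_0, …, f_n) : Δ → ℝ^{n+1} satisfy the Walras law, and let φ : Δ → Δ be defined by φ_i(p) = (p_i + max(f_i(p), 0)) / (1 + Σ_{j=0}^n max(f_j(p), 0)). If p* ∈ Δ is a fixed point of φ, i.e., φ(p*) = p*, then max(f_i(p*), 0) = 0 (equivalently f_i(p*) ≤ 0) for every i = 0, 1, …, n, and f_i(p*) = 0 for every i with p*_i > 0. -/
open Filter Topology

noncomputable section

/-- The ambient Euclidean space `ℝ^{n+1}`. -/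
abbrev E (n : ℕ) := EuclideanSpace ℝ (Fin (n + 1))

/-- The standard `n`-dimensional simplex in `ℝ^{n+1}` with the Euclidean metric. -/
def simplexE (n : ℕ) : Set (E n) := {p | (∀ i, 0 ≤ p i) ∧ ∑ i, p i = 1}

/-- If `f` satisfies the Walras law and `p* ∈ Δ` is a fixed point of the map
`φ_i(p) = (p_i + max(f_i(p), 0)) / (1 + Σ_j max(f_j(p), 0))`, then
`max(f_i(p*), 0) = 0` (equivalently `f_i(p*) ≤ 0`) for every `i`, and `f_i(p*) = 0`
for every `i` with `p*_i > 0`. -/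
theorem fixed_point_is_equilibrium (n : ℕ) (f : E n → E n)
    (hwalras : ∀ p ∈ simplexE n, ∑ i, p i * f p i = 0)
    (pstar : E n) (hp : pstar ∈ simplexE n)
    (hfix : ∀ i, (pstar i + max (f pstar i) 0) / (1 + ∑ j, max (f pstar j) 0) = pstar i) :
    (∀ i, max (f pstar i) 0 = 0) ∧ (∀ i, f pstar i ≤ 0) ∧
      ∀ i, 0 < pstar i → f pstar i = 0 := by
  set S := ∑ j, max (f pstar j) 0 with hSdef
  have hS0 : 0 ≤ S := Finset.sum_nonneg fun j _ => le_max_right _ _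
  have hpos : (0:ℝ) < 1 + S := by linarith
  have hm : ∀ i, max (f pstar i) 0 = pstar i * S := by
    intro i
    have h := hfix i
    field_simp at h
    linarith
  have hW := hwalras pstar hp
  -- S = 0
  have hSzero : S = 0 := by
    by_contra hne
    have hSpos : 0 < S := lt_of_le_of_ne hS0 (Ne.symm hne)
    have key : ∑ i, max (f pstar i) 0 * max (f pstar i) 0 = 0 := by
      have : ∑ i, max (f pstar i) 0 * max (f pstar i) 0
          = ∑ i, (pstar i * f pstar i) * S := by
        apply Finset.sum_congr rfl
        intro i _
        rcases le_or_gt (f pstar i) 0 with h | h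
        · rw [max_eq_right h]
          have : pstar i * S = 0 := by rw [← hm i, max_eq_right h]
          linear_combination (-(f pstar i)) * this
        · have h2 := hm i
          rw [max_eq_left h.le] at h2
          rw [max_eq_left h.le, h2]; ring
      rw [this, ← Finset.sum_mul, hW, zero_mul]
    have hall : ∀ i ∈ Finset.univ, max (f pstar i) 0 * max (f pstar i) 0 = 0 := by
      intro i _
      have := (Finset.sum_eq_zero_iff_of_nonneg
        (fun i _ => mul_self_nonneg (max (f pstar i) 0))).mp key i (Finset.mem_univ i)
      exact this
    have : S = 0 := by
      apply Finset.sum_eq_zero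
      intro i _
      have := hall i (Finset.mem_univ i)
      exact mul_self_eq_zero.mp this
    exact hne this
  have hmax0 : ∀ i, max (f pstar i) 0 = 0 := by
    intro i; rw [hm i, hSzero, mul_zero]
  have hle : ∀ i, f pstar i ≤ 0 := fun i => by
    have := hmax0 i; rw [max_eq_iff] at this
    rcases this with ⟨h, _⟩ | ⟨_, h⟩
    · exact h.le
    · exact h
  refine ⟨hmax0, hle, ?_⟩
  intro i hpi
  have hterms : ∀ j ∈ Finset.univ, pstar j * f pstar j ≤ 0 :=
    fun j _ => mul_nonpos_of_nonneg_of_nonpos (hp.1 j) (hle j)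
  have hzero : ∀ j ∈ Finset.univ, pstar j * f pstar j = 0 := by
    intro j hj
    have hsum0 : ∑ j, (-(pstar j * f pstar j)) = 0 := by
      simp [Finset.sum_neg_distrib, hW]
    have := (Finset.sum_eq_zero_iff_of_nonneg
      (fun j _ => neg_nonneg.mpr (hterms j (Finset.mem_univ j)))).mp hsum0 j hj
    linarith
  have := hzero i (Finset.mem_univ i)
  rcases mul_eq_zero.mp this with h | h
  · exact absurd h hpi.ne'
  · exact h
end
end

section
/- Let f = (f_0, …, f_n) : Δ → ℝ^{n+1} be uniformly continuous and satisfy the Walras law, and let φ : Δ → Δ be defined by φ_i(p) = (p_i + max(f_i(p), 0)) / (1 + Σ_{j=0}^n max(f_j(p), 0)). If (p_k)_{k≥1} is a sequence in Δ with |φ(p_k) − p_k| → 0 as k → ∞, then max(f_i(p_k), 0) → 0 as k → ∞ for every i = 0, 1, …, n. -/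
open Filter Topology

noncomputable section

/-!
Write `g = max(f, 0)` and `T = ∑ⱼ gⱼ`, so that `(1 + T)(φᵢ - pᵢ) = gᵢ - pᵢ T`. Pairing with `f`
and using the Walras law `⟪p, f⟫ = 0` together with `fᵢ gᵢ = gᵢ²` gives the identity
`∑ᵢ gᵢ² = (1 + T) ⟪f, φ(p) - p⟫`. Since `f` is bounded on the compact simplex, the right-hand
side is at most a constant times `|φ(p) - p|`, which tends to zero along the sequence.
-/

theorem simplexE_eq_image_stdSimplex (n : ℕ) :
    simplexE n = WithLp.toLp 2 '' stdSimplex ℝ (Fin (n + 1)) := by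
  ext q
  exact ⟨fun hq => ⟨q.ofLp, hq, rfl⟩, by rintro ⟨x, hx, rfl⟩; exact hx⟩

theorem isCompact_simplexE (n : ℕ) : IsCompact (simplexE n) := by
  rw [simplexE_eq_image_stdSimplex]
  exact (isCompact_stdSimplex ℝ _).image (PiLp.continuous_toLp 2 _)

theorem mul_max_zero_self (y : ℝ) : y * max y 0 = max y 0 ^ 2 := by
  rcases le_total 0 y with h | h <;> simp [h, sq]

section

variable {ι : Type*} [Fintype ι]

theorem sum_sq_max_zero_eq_of_sum_mul_eq_zero (p y : ι → ℝ) (hw : ∑ i, p i * y i = 0) :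
    ∑ i, max (y i) 0 ^ 2 =
      (1 + ∑ j, max (y j) 0) *
        ∑ i, y i * ((p i + max (y i) 0) / (1 + ∑ j, max (y j) 0) - p i) := by
  set T := ∑ j, max (y j) 0
  have hT : 1 + T ≠ 0 := by positivity
  calc ∑ i, max (y i) 0 ^ 2 = ∑ i, (y i * max (y i) 0 - T * (p i * y i)) := by
        rw [Finset.sum_sub_distrib, ← Finset.mul_sum, hw, mul_zero, sub_zero]
        exact Finset.sum_congr rfl fun i _ => (mul_max_zero_self (y i)).symm
    _ = (1 + T) * ∑ i, y i * ((p i + max (y i) 0) / (1 + T) - p i) := by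
        rw [Finset.mul_sum]
        refine Finset.sum_congr rfl fun i _ => ?_
        field_simp
        ring

theorem sum_sq_max_zero_le_mul_dist {M : ℝ} (p y r : EuclideanSpace ℝ ι)
    (hw : ∑ i, p i * y i = 0)
    (hr : ∀ i, r i = (p i + max (y i) 0) / (1 + ∑ j, max (y j) 0)) (hy : ‖y‖ ≤ M) :
    ∑ i, max (y i) 0 ^ 2 ≤ (1 + Fintype.card ι * M) * (M * dist r p) := by
  have hM : 0 ≤ M := (norm_nonneg y).trans hy
  have hmax_le : ∀ j, max (y j) 0 ≤ M := fun j =>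
    max_le ((le_abs_self _).trans ((PiLp.norm_apply_le y j).trans hy)) hM
  have hT : 1 + ∑ j, max (y j) 0 ≤ 1 + Fintype.card ι * M := by
    have := Finset.sum_le_card_nsmul Finset.univ _ M fun j _ => hmax_le j
    simpa using this
  have hinner : ∑ i, y i * (r i - p i) = inner ℝ (r - p) y := by
    simp [PiLp.inner_apply]
  have hS : ∑ i, y i * (r i - p i) ≤ M * dist r p := by
    rw [hinner, dist_eq_norm, mul_comm M]
    exact (real_inner_le_norm _ _).trans (mul_le_mul_of_nonneg_left hy (norm_nonneg _))
  have hkey := sum_sq_max_zero_eq_of_sum_mul_eq_zero p y hw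
  simp only [← hr] at hkey
  have hS0 : 0 ≤ ∑ i, y i * (r i - p i) :=
    nonneg_of_mul_nonneg_right (by rw [← hkey]; positivity) (by positivity)
  rw [hkey]
  exact mul_le_mul hT hS hS0 (by positivity)

end

/-- Let `f` be uniformly continuous and satisfy the Walras law, and let
`φ_i(p) = (p_i + max(f_i(p), 0)) / (1 + Σ_j max(f_j(p), 0))`.  If `(p_k)` is a sequence
in the simplex with `|φ(p_k) − p_k| → 0`, then `max(f_i(p_k), 0) → 0` for every `i`. -/
theorem approx_fixed_implies_approx_equilibrium (n : ℕ) (f : E n → E n)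
    (huc : UniformContinuousOn f (simplexE n))
    (hwalras : ∀ p ∈ simplexE n, ∑ i, p i * f p i = 0)
    (φ : E n → E n)
    (hφ : ∀ p i, φ p i = (p i + max (f p i) 0) / (1 + ∑ j, max (f p j) 0))
    (p : ℕ → E n) (hpΔ : ∀ k, p k ∈ simplexE n)
    (hconv : Tendsto (fun k => dist (φ (p k)) (p k)) atTop (nhds 0)) :
    ∀ i, Tendsto (fun k => max (f (p k) i) 0) atTop (nhds 0) := by
  intro i
  obtain ⟨M, hM⟩ := (isCompact_simplexE n).exists_bound_of_continuousOn huc.continuousOn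
  set C := (1 + Fintype.card (Fin (n + 1)) * M) * M
  have hbound : ∀ k, max (f (p k) i) 0 ≤ √(C * dist (φ (p k)) (p k)) := fun k => by
    refine Real.le_sqrt_of_sq_le ?_
    calc max (f (p k) i) 0 ^ 2 ≤ ∑ j, max (f (p k) j) 0 ^ 2 :=
          Finset.single_le_sum (fun j _ => sq_nonneg (max (f (p k) j) 0)) (Finset.mem_univ i)
      _ ≤ C * dist (φ (p k)) (p k) := by
          rw [mul_assoc]
          exact sum_sq_max_zero_le_mul_dist _ _ _ (hwalras _ (hpΔ k)) (hφ (p k)) (hM _ (hpΔ k))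
  have hlim : Tendsto (fun k => √(C * dist (φ (p k)) (p k))) atTop (𝓝 0) := by
    simpa using (hconv.const_mul C).sqrt
  exact squeeze_zero (fun k => le_max_right _ _) hbound hlim
end
end

section
/- Let φ : Δ → Δ, and for p ∈ Δ define μ(p) = (Σ_{i=0}^n p_i φ_i(p)) / (Σ_{i=0}^n p_i²) and g_i(p) = φ_i(p) − p_i μ(p). Suppose p* ∈ Δ is an equilibrium of g, i.e., g_i(p*) ≤ 0 for all i = 0, 1, …, n and g_i(p*) = 0 for every i with p*_i > 0. Then μ(p*) = 1 and φ(p*) = p*. -/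
open Filter Topology

noncomputable section

/- At an equilibrium, `φ_i(p*) = p*_i μ(p*)` for every `i`: on the support this is `g_i(p*) = 0`,
and off the support `0 ≤ φ_i(p*) = g_i(p*) ≤ 0`. Summing over `i`, both `φ(p*)` and `p*` lie in
the simplex, so `1 = μ(p*) · 1`. -/

theorem eq_mul_of_complementary_slackness {a p c : ℝ} (ha : 0 ≤ a) (hp : 0 ≤ p)
    (hle : a ≤ p * c) (heq : 0 < p → a = p * c) : a = p * c := by
  rcases hp.eq_or_lt with hp0 | hpos
  · subst hp0
    rw [zero_mul] at hle ⊢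
    exact le_antisymm hle ha
  · exact heq hpos

theorem eq_one_of_forall_eq_mul_of_sum_eq_one {ι : Type*} [Fintype ι] {f p : ι → ℝ} {c : ℝ}
    (hf : ∑ i, f i = 1) (hp : ∑ i, p i = 1) (h : ∀ i, f i = p i * c) : c = 1 := by
  calc c = (∑ i, p i) * c := by rw [hp, one_mul]
    _ = ∑ i, f i := by rw [Finset.sum_mul]; exact (Finset.sum_congr rfl fun i _ => h i).symm
    _ = 1 := hf

theorem equilibrium_of_g_is_fixed_point_general (n : ℕ) (φ : E n → E n)
    (hmap : Set.MapsTo φ (simplexE n) (simplexE n))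
    (μ : E n → ℝ)
    (g : E n → E n)
    (hg : ∀ p i, g p i = φ p i - p i * μ p)
    (pstar : E n) (hp : pstar ∈ simplexE n)
    (heq₁ : ∀ i, g pstar i ≤ 0)
    (heq₂ : ∀ i, 0 < pstar i → g pstar i = 0) :
    μ pstar = 1 ∧ φ pstar = pstar := by
  obtain ⟨hφ_nonneg, hφ_sum⟩ := hmap hp
  have hφ : ∀ i, φ pstar i = pstar i * μ pstar := fun i =>
    eq_mul_of_complementary_slackness (hφ_nonneg i) (hp.1 i)
      (sub_nonpos.mp (hg pstar i ▸ heq₁ i))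
      (fun hpos => sub_eq_zero.mp (hg pstar i ▸ heq₂ i hpos))
  have hμ : μ pstar = 1 := eq_one_of_forall_eq_mul_of_sum_eq_one hφ_sum hp.2 hφ
  refine ⟨hμ, ?_⟩
  ext i
  rw [hφ i, hμ, mul_one]

/-- With `μ(p) = (Σ_i p_i φ_i(p)) / (Σ_i p_i²)` and `g_i(p) = φ_i(p) − p_i μ(p)`: if
`p* ∈ Δ` is an equilibrium of `g` (`g_i(p*) ≤ 0` for all `i` and `g_i(p*) = 0` whenever
`p*_i > 0`), then `μ(p*) = 1` and `φ(p*) = p*`. -/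
theorem equilibrium_of_g_is_fixed_point (n : ℕ) (φ : E n → E n)
    (hmap : Set.MapsTo φ (simplexE n) (simplexE n))
    (μ : E n → ℝ)
    (hμ : ∀ p, μ p = (∑ i, p i * φ p i) / (∑ i, (p i) ^ 2))
    (g : E n → E n)
    (hg : ∀ p i, g p i = φ p i - p i * μ p)
    (pstar : E n) (hp : pstar ∈ simplexE n)
    (heq₁ : ∀ i, g pstar i ≤ 0)
    (heq₂ : ∀ i, 0 < pstar i → g pstar i = 0) :
    μ pstar = 1 ∧ φ pstar = pstar :=
  equilibrium_of_g_is_fixed_point_general n φ hmap μ g hg pstar hp heq₁ heq₂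
end
end

section
/- Let φ : Δ → Δ be continuous, and for p ∈ Δ define μ(p) = (Σ_{i=0}^n p_i φ_i(p)) / (Σ_{i=0}^n p_i²) and g_i(p) = φ_i(p) − p_i μ(p). If (p_k)_{k≥1} is a sequence in Δ such that max(g_i(p_k), 0) → 0 as k → ∞ for every i = 0, 1, …, n, then |φ(p_k) − p_k| → 0 as k → ∞. -/
open Filter Topology

noncomputable section

/-- Let `φ : Δ → Δ` be continuous, `μ(p) = (Σ_i p_i φ_i(p)) / (Σ_i p_i²)` and
`g_i(p) = φ_i(p) − p_i μ(p)`.  If `(p_k)` is a sequence in `Δ` with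
`max(g_i(p_k), 0) → 0` for every `i`, then `|φ(p_k) − p_k| → 0`. -/
theorem approx_equilibrium_implies_approx_fixed (n : ℕ) (φ : E n → E n)
    (hmap : Set.MapsTo φ (simplexE n) (simplexE n))
    (hcont : ContinuousOn φ (simplexE n))
    (μ : E n → ℝ)
    (hμ : ∀ p, μ p = (∑ i, p i * φ p i) / (∑ i, (p i) ^ 2))
    (g : E n → E n)
    (hg : ∀ p i, g p i = φ p i - p i * μ p)
    (p : ℕ → E n) (hpΔ : ∀ k, p k ∈ simplexE n)
    (hconv : ∀ i, Tendsto (fun k => max (g (p k) i) 0) atTop (nhds 0)) :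
    Tendsto (fun k => dist (φ (p k)) (p k)) atTop (nhds 0) := by
  have hA : ∀ k i, 0 ≤ p k i := fun k => (hpΔ k).1
  have hB : ∀ k, ∑ i, p k i = 1 := fun k => (hpΔ k).2
  have hC : ∀ k i, 0 ≤ φ (p k) i := fun k => (hmap (hpΔ k)).1
  have hD : ∀ k, ∑ i, φ (p k) i = 1 := fun k => (hmap (hpΔ k)).2
  have hple : ∀ k i, p k i ≤ 1 := by
    intro k i
    calc p k i ≤ ∑ j, p k j :=
      Finset.single_le_sum (fun j _ => hA k j) (Finset.mem_univ i)
    _ = 1 := hB k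
  -- lower bound on denominator
  have hden_lb : ∀ k, 1 / (n + 1 : ℝ) ≤ ∑ i, (p k i) ^ 2 := by
    intro k
    have h := sq_sum_le_card_mul_sum_sq (s := Finset.univ) (f := p k)
    rw [hB k] at h
    simp only [Finset.card_univ, Fintype.card_fin] at h
    rw [div_le_iff₀ (by positivity)]
    push_cast at h ⊢
    linarith
  have hden_pos : ∀ k, 0 < ∑ i, (p k i) ^ 2 := fun k =>
    lt_of_lt_of_le (by positivity) (hden_lb k)
  have hnum_nonneg : ∀ k, 0 ≤ ∑ i, p k i * φ (p k) i := fun k =>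
    Finset.sum_nonneg fun i _ => mul_nonneg (hA k i) (hC k i)
  have hφle : ∀ k i, φ (p k) i ≤ 1 := by
    intro k i
    calc φ (p k) i ≤ ∑ j, φ (p k) j :=
      Finset.single_le_sum (fun j _ => hC k j) (Finset.mem_univ i)
    _ = 1 := hD k
  have hnum_le : ∀ k, ∑ i, p k i * φ (p k) i ≤ 1 := by
    intro k
    calc ∑ i, p k i * φ (p k) i ≤ ∑ i, p k i :=
      Finset.sum_le_sum fun i _ => mul_le_of_le_one_right (hA k i) (hφle k i)
    _ = 1 := hB k
  have hμ0 : ∀ k, 0 ≤ μ (p k) := fun k => by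
    rw [hμ]; exact div_nonneg (hnum_nonneg k) (hden_pos k).le
  have hμle : ∀ k, μ (p k) ≤ (n + 1 : ℝ) := by
    intro k
    rw [hμ, div_le_iff₀ (hden_pos k)]
    calc ∑ i, p k i * φ (p k) i ≤ 1 := hnum_le k
    _ = (n + 1 : ℝ) * (1 / (n + 1 : ℝ)) := by field_simp
    _ ≤ (n + 1 : ℝ) * ∑ i, (p k i) ^ 2 :=
      mul_le_mul_of_nonneg_left (hden_lb k) (by positivity)
  have hsum_pg : ∀ k, ∑ i, p k i * g (p k) i = 0 := by
    intro k
    have : ∀ i, p k i * g (p k) i = p k i * φ (p k) i - (p k i) ^ 2 * μ (p k) := by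
      intro i; rw [hg]; ring
    rw [Finset.sum_congr rfl fun i _ => this i, Finset.sum_sub_distrib,
      ← Finset.sum_mul, hμ, mul_div_assoc']
    rw [mul_comm, mul_div_assoc, div_self (hden_pos k).ne', mul_one, sub_self]
  have hsum_g : ∀ k, ∑ i, g (p k) i = 1 - μ (p k) := by
    intro k
    have : ∀ i, g (p k) i = φ (p k) i - p k i * μ (p k) := fun i => hg _ _
    rw [Finset.sum_congr rfl fun i _ => this i, Finset.sum_sub_distrib,
      ← Finset.sum_mul, hD k, hB k, one_mul]
  -- total positive part
  set S : ℕ → ℝ := fun k => ∑ i, max (g (p k) i) 0 with hS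
  have hS0 : Tendsto S atTop (nhds 0) := by
    have := tendsto_finset_sum Finset.univ (fun i _ => hconv i)
    simpa using this
  have hSnonneg : ∀ k, 0 ≤ S k :=
    fun k => Finset.sum_nonneg fun i _ => le_max_right _ _
  -- negative part bound
  have hneg : ∀ k i, max (-(g (p k) i)) 0 ^ 2 ≤ (n + 1 : ℝ) * S k := by
    intro k i
    set ni : ℝ := max (-(g (p k) i)) 0 with hni
    have h1 : ni ≤ p k i * μ (p k) := by
      have hgi' := hg (p k) i
      have hφ := hC k i
      apply max_le _ (mul_nonneg (hA k i) (hμ0 k))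
      linarith
    have h1' : ni ≤ p k i * (n + 1 : ℝ) :=
      h1.trans (mul_le_mul_of_nonneg_left (hμle k) (hA k i))
    have hninn : 0 ≤ ni := le_max_right _ _
    -- ∑ p_j n_j = ∑ p_j m_j ≤ S k
    have key : p k i * ni ≤ S k := by
      have hsplit : ∀ j, p k j * g (p k) j
          = p k j * max (g (p k) j) 0 - p k j * max (-(g (p k) j)) 0 := by
        intro j
        rcases le_total (g (p k) j) 0 with h | h
        · rw [max_eq_right h, max_eq_left (by linarith)]; ring
        · rw [max_eq_left h, max_eq_right (by linarith)]; ring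
      have := hsum_pg k
      rw [Finset.sum_congr rfl fun j _ => hsplit j, Finset.sum_sub_distrib,
        sub_eq_zero] at this
      calc p k i * ni ≤ ∑ j, p k j * max (-(g (p k) j)) 0 :=
            Finset.single_le_sum (f := fun j => p k j * max (-(g (p k) j)) 0)
              (fun j _ => mul_nonneg (hA k j) (le_max_right _ _)) (Finset.mem_univ i)
        _ = ∑ j, p k j * max (g (p k) j) 0 := this.symm
        _ ≤ ∑ j, max (g (p k) j) 0 :=
            Finset.sum_le_sum fun j _ =>
              mul_le_of_le_one_left (le_max_right _ _) (hple k j)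
    calc ni ^ 2 = ni * ni := sq ni
    _ ≤ (p k i * (n + 1 : ℝ)) * ni := mul_le_mul_of_nonneg_right h1' hninn
    _ = (n + 1 : ℝ) * (p k i * ni) := by ring
    _ ≤ (n + 1 : ℝ) * S k := mul_le_mul_of_nonneg_left key (by positivity)
  -- each coordinate of g tends to 0
  have hgi : ∀ i, Tendsto (fun k => g (p k) i) atTop (nhds 0) := by
    intro i
    apply squeeze_zero_norm (a := fun k => max (g (p k) i) 0
      + Real.sqrt ((n + 1 : ℝ) * S k))
    · intro k
      have hb : max (-(g (p k) i)) 0 ≤ Real.sqrt ((n + 1 : ℝ) * S k) := by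
        have := hneg k i
        nlinarith [Real.sq_sqrt (by positivity : (0:ℝ) ≤ (n + 1 : ℝ) * S k),
          Real.sqrt_nonneg ((n + 1 : ℝ) * S k), le_max_right (-(g (p k) i)) 0]
      have habs : |g (p k) i| ≤ max (g (p k) i) 0 + max (-(g (p k) i)) 0 := by
        rcases le_total (g (p k) i) 0 with h | h
        · rw [abs_of_nonpos h]; simp [max_eq_right h]
        · rw [abs_of_nonneg h]; simp [max_eq_left h]
      calc ‖g (p k) i‖ = |g (p k) i| := rfl
      _ ≤ max (g (p k) i) 0 + max (-(g (p k) i)) 0 := habs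
      _ ≤ max (g (p k) i) 0 + Real.sqrt ((n + 1 : ℝ) * S k) := by linarith
    · have h1 : Tendsto (fun k => (n + 1 : ℝ) * S k) atTop (nhds 0) := by
        simpa using hS0.const_mul (n + 1 : ℝ)
      have h2 : Tendsto (fun k => Real.sqrt ((n + 1 : ℝ) * S k)) atTop (nhds 0) := by
        simpa using h1.sqrt
      simpa using (hconv i).add h2
  -- μ tends to 1
  have hμ1 : Tendsto (fun k => μ (p k)) atTop (nhds 1) := by
    have hsum : Tendsto (fun k => ∑ i, g (p k) i) atTop (nhds 0) := by
      have := tendsto_finset_sum Finset.univ (fun i (_ : i ∈ Finset.univ) => hgi i)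
      simpa using this
    have : Tendsto (fun k => 1 - ∑ i, g (p k) i) atTop (nhds (1 - 0)) :=
      tendsto_const_nhds.sub hsum
    simp only [sub_zero] at this
    refine this.congr fun k => ?_
    rw [hsum_g]; ring
  -- each coordinate of φ - p tends to 0
  have hcoord : ∀ i, Tendsto (fun k => φ (p k) i - p k i) atTop (nhds 0) := by
    intro i
    have : Tendsto (fun k => g (p k) i + p k i * (μ (p k) - 1)) atTop (nhds 0) := by
      have h2 : Tendsto (fun k => p k i * (μ (p k) - 1)) atTop (nhds 0) := by
        apply squeeze_zero_norm (a := fun k => |μ (p k) - 1|)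
        · intro k
          rw [Real.norm_eq_abs, abs_mul, abs_of_nonneg (hA k i)]
          exact mul_le_of_le_one_left (abs_nonneg _) (hple k i)
        · have : Tendsto (fun k => μ (p k) - 1) atTop (nhds 0) := by
            simpa using hμ1.sub_const 1
          simpa using this.abs
      simpa using (hgi i).add h2
    refine this.congr fun k => ?_
    rw [hg]; ring
  -- conclude
  have hdist : ∀ k, dist (φ (p k)) (p k)
      = Real.sqrt (∑ i, (φ (p k) i - p k i) ^ 2) := by
    intro k
    rw [EuclideanSpace.dist_eq]
    congr 1
    exact Finset.sum_congr rfl fun i _ => by rw [Real.dist_eq, sq_abs]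
  have hsumsq : Tendsto (fun k => ∑ i, (φ (p k) i - p k i) ^ 2) atTop (nhds 0) := by
    have := tendsto_finset_sum Finset.univ
      (fun i (_ : i ∈ Finset.univ) => ((hcoord i).pow 2))
    simpa using this
  have : Tendsto (fun k => Real.sqrt (∑ i, (φ (p k) i - p k i) ^ 2)) atTop (nhds 0) := by
    simpa using hsumsq.sqrt
  exact this.congr fun k => (hdist k).symm
end
end

section
/- Let n ≥ 1, let p^0, p^1, …, p^n ∈ Δ with p^i_i > 0 for each i, and let τ satisfy 0 < τ < p^i_i for all i. Define φ(p^i) ∈ ℝ^{n+1} by φ(p^i)_j = p^i_j − τ if j = i and φ(p^i)_j = p^i_j + τ/n if j ≠ i; for barycentric weights λ with λ_i ≥ 0 and Σ λ_i = 1, set r(λ) = Σ λ_i p^i and Φ(λ) = Σ λ_i φ(p^i). If (λ(m))_{m≥1} and (λ'(m))_{m≥1} are sequences of barycentric weights such that |Φ(λ(m)) − r(λ(m))| → 0 and |Φ(λ'(m)) − r(λ'(m))| → 0 as m → ∞, then λ(m)_i → 1/(n+1) and λ'(m)_i → 1/(n+1) for every i, and consequently |r(λ(m)) − r(λ'(m))|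 → 0. -/
open Filter Topology

noncomputable section

/-! Since `Σ λ_j = 1`, the `i`-th coordinate of `Φ(λ) − r(λ)` is `τ/n − τ(n+1)/n · λ_i`, an
affine function of `λ_i` vanishing exactly at `λ_i = 1/(n+1)`. Hence `Φ(λ(m)) − r(λ(m)) → 0`
forces `λ(m)_i → 1/(n+1)`, and `r(λ(m))`, `r(λ'(m))` both converge to the barycentre of the
`p^i`. -/

section

variable {n : ℕ} {P φP : Fin (n + 1) → E n} {τ : ℝ}

lemma sum_smul_sub_sum_smul_apply (w : Fin (n + 1) → ℝ) (i : Fin (n + 1)) :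
    (∑ j, w j • φP j - ∑ j, w j • P j) i = ∑ j, w j * (φP j i - P j i) := by
  simp [WithLp.ofLp_sum, Finset.sum_apply, mul_sub]

lemma perturbation_gap_apply
    (hφP : ∀ i j, φP i j = if j = i then P i j - τ else P i j + τ / (n : ℝ))
    (w : Fin (n + 1) → ℝ) (i : Fin (n + 1)) :
    (∑ j, w j • φP j - ∑ j, w j • P j) i = τ / n * ∑ j, w j - (τ + τ / n) * w i := by
  have hstep : ∀ j, w j * (φP j i - P j i) =
      τ / n * w j - if i = j then (τ + τ / n) * w j else 0 := by
    intro j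
    rw [hφP]
    split_ifs <;> ring
  simp only [sum_smul_sub_sum_smul_apply, hstep, Finset.sum_sub_distrib, ← Finset.mul_sum,
    Finset.sum_ite_eq, Finset.mem_univ, if_true]

lemma weight_eq_of_perturbation_gap (hn : n ≠ 0) (hτ : τ ≠ 0)
    (hφP : ∀ i j, φP i j = if j = i then P i j - τ else P i j + τ / (n : ℝ))
    {w : Fin (n + 1) → ℝ} (hw : ∑ j, w j = 1) (i : Fin (n + 1)) :
    w i = 1 / ((n : ℝ) + 1) -
      n / (τ * (n + 1)) * (∑ j, w j • φP j - ∑ j, w j • P j) i := by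
  rw [perturbation_gap_apply hφP, hw]
  field_simp
  ring

lemma tendsto_apply_of_tendsto_dist {ι : Type*} [Fintype ι] {u v : ℕ → EuclideanSpace ℝ ι}
    (h : Tendsto (fun m => dist (u m) (v m)) atTop (𝓝 0)) (i : ι) :
    Tendsto (fun m => (u m - v m) i) atTop (𝓝 0) := by
  have hsub : Tendsto (fun m => u m - v m) atTop (𝓝 0) := by
    simpa [tendsto_iff_dist_tendsto_zero, dist_eq_norm] using h
  simpa [Function.comp_def] using ((PiLp.continuous_apply 2 _ i).tendsto 0).comp hsub

lemma tendsto_weights_of_tendsto_perturbation_gap (hn : n ≠ 0) (hτ : τ ≠ 0)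
    (hφP : ∀ i j, φP i j = if j = i then P i j - τ else P i j + τ / (n : ℝ))
    {lam : ℕ → Fin (n + 1) → ℝ} (hlam : ∀ m, ∑ i, lam m i = 1)
    (hconv : Tendsto
      (fun m => dist (∑ i, lam m i • φP i) (∑ i, lam m i • P i)) atTop (𝓝 0))
    (i : Fin (n + 1)) :
    Tendsto (fun m => lam m i) atTop (𝓝 (1 / ((n : ℝ) + 1))) := by
  simp_rw [weight_eq_of_perturbation_gap hn hτ hφP (hlam _) i]
  simpa using tendsto_const_nhds.sub
    ((tendsto_apply_of_tendsto_dist hconv i).const_mul (n / (τ * (n + 1))))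

end

theorem fully_labeled_sequential_general (n : ℕ) (hn : 1 ≤ n)
    (P : Fin (n + 1) → E n)
    (τ : ℝ) (hτ0 : 0 < τ)
    (φP : Fin (n + 1) → E n)
    (hφP : ∀ i j, φP i j = if j = i then P i j - τ else P i j + τ / (n : ℝ))
    (lam lam' : ℕ → Fin (n + 1) → ℝ)
    (hlam1 : ∀ m, ∑ i, lam m i = 1)
    (hlam'1 : ∀ m, ∑ i, lam' m i = 1)
    (hconv : Tendsto
      (fun m => dist (∑ i, lam m i • φP i) (∑ i, lam m i • P i)) atTop (nhds 0))
    (hconv' : Tendsto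
      (fun m => dist (∑ i, lam' m i • φP i) (∑ i, lam' m i • P i)) atTop (nhds 0)) :
    (∀ i, Tendsto (fun m => lam m i) atTop (nhds (1 / ((n : ℝ) + 1)))) ∧
    (∀ i, Tendsto (fun m => lam' m i) atTop (nhds (1 / ((n : ℝ) + 1)))) ∧
    Tendsto (fun m => dist (∑ i, lam m i • P i) (∑ i, lam' m i • P i)) atTop (nhds 0) := by
  have hn0 : n ≠ 0 := by omega
  have hlim := tendsto_weights_of_tendsto_perturbation_gap hn0 hτ0.ne' hφP hlam1 hconv
  have hlim' := tendsto_weights_of_tendsto_perturbation_gap hn0 hτ0.ne' hφP hlam'1 hconv'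
  refine ⟨hlim, hlim', ?_⟩
  have hbary : ∀ μ : ℕ → Fin (n + 1) → ℝ,
      (∀ i, Tendsto (fun m => μ m i) atTop (𝓝 (1 / ((n : ℝ) + 1)))) →
      Tendsto (fun m => ∑ i, μ m i • P i) atTop (𝓝 (∑ i, (1 / ((n : ℝ) + 1)) • P i)) :=
    fun μ hμ => tendsto_finsetSum _ fun i _ => (hμ i).smul tendsto_const_nhds
  simpa using (hbary lam hlim).dist (hbary lam' hlim')

/-- Fully labeled case: `p^0, …, p^n ∈ Δ` with `p^i_i > 0`, `0 < τ < p^i_i`,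
`φ(p^i)_j = p^i_j − τ` if `j = i` and `p^i_j + τ/n` otherwise; for barycentric weights
`λ` set `r(λ) = Σ λ_i p^i` and `Φ(λ) = Σ λ_i φ(p^i)`.  If `(λ(m))` and `(λ'(m))` are
sequences of barycentric weights with `|Φ(λ(m)) − r(λ(m))| → 0` and
`|Φ(λ'(m)) − r(λ'(m))| → 0`, then `λ(m)_i → 1/(n+1)` and `λ'(m)_i → 1/(n+1)` for every
`i`, and consequently `|r(λ(m)) − r(λ'(m))| → 0`. -/
theorem fully_labeled_sequential (n : ℕ) (hn : 1 ≤ n)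
    (P : Fin (n + 1) → E n) (hP : ∀ i, P i ∈ simplexE n)
    (hPd : ∀ i, 0 < P i i)
    (τ : ℝ) (hτ0 : 0 < τ) (hτ : ∀ i, τ < P i i)
    (φP : Fin (n + 1) → E n)
    (hφP : ∀ i j, φP i j = if j = i then P i j - τ else P i j + τ / (n : ℝ))
    (lam lam' : ℕ → Fin (n + 1) → ℝ)
    (hlam0 : ∀ m i, 0 ≤ lam m i) (hlam1 : ∀ m, ∑ i, lam m i = 1)
    (hlam'0 : ∀ m i, 0 ≤ lam' m i) (hlam'1 : ∀ m, ∑ i, lam' m i = 1)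
    (hconv : Tendsto
      (fun m => dist (∑ i, lam m i • φP i) (∑ i, lam m i • P i)) atTop (nhds 0))
    (hconv' : Tendsto
      (fun m => dist (∑ i, lam' m i • φP i) (∑ i, lam' m i • P i)) atTop (nhds 0)) :
    (∀ i, Tendsto (fun m => lam m i) atTop (nhds (1 / ((n : ℝ) + 1)))) ∧
    (∀ i, Tendsto (fun m => lam' m i) atTop (nhds (1 / ((n : ℝ) + 1)))) ∧
    Tendsto (fun m => dist (∑ i, lam m i • P i) (∑ i, lam' m i • P i)) atTop (nhds 0) :=
  fully_labeled_sequential_general n hn P τ hτ0 φP hφP lam lam' hlam1 hlam'1 hconv hconv'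
end
end
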